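/- arXiv:1908.01171 — 3 statements merged into one kernel-verified Lean document; each statement's English description precedes it below -/
import Mathlib

section
/- Let α, β ∈ ℝ₊ᴺ be vectors with ∑ₙ αⁿ ≤ 1 and ∑ₙ βⁿ ≤ 1, and suppose that for each n, βⁿ = 0 implies αⁿ = 0. Then ∑ₙ αⁿ(ln αⁿ − ln βⁿ) ≥ (1/4)∑ₙ (αⁿ − βⁿ)² + ∑ₙ αⁿ − ∑ₙ βⁿ, with the convention that αⁿ(ln αⁿ − ln βⁿ) = 0 when αⁿ = 0. -/
lemma gibbs_pointwise (a b : ℝ) (ha : 0 ≤ a) (hb : 0 ≤ b) (ha1 : a ≤ 1) (hb1 : b ≤ 1)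
    (hdom : b = 0 → a = 0) :
    (1 / 4) * (a - b) ^ 2 + a - b ≤
      (if a = 0 then 0 else a * (Real.log a - Real.log b)) := by
  by_cases h : a = 0
  · simp [h]
    nlinarith [sq_nonneg b]
  · rw [if_neg h]
    have ha' : 0 < a := lt_of_le_of_ne ha (Ne.symm h)
    have hb' : 0 < b := lt_of_le_of_ne hb (fun e => h (hdom e.symm))
    set s := Real.sqrt a with hs
    set t := Real.sqrt b with ht
    have hs0 : 0 < s := Real.sqrt_pos.mpr ha'
    have ht0 : 0 < t := Real.sqrt_pos.mpr hb'
    have hs1 : s ≤ 1 := Real.sqrt_le_one.mpr ha1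
    have ht1 : t ≤ 1 := Real.sqrt_le_one.mpr hb1
    have hsa : s ^ 2 = a := Real.sq_sqrt ha
    have htb : t ^ 2 = b := Real.sq_sqrt hb
    -- log (t/s) ≤ t/s - 1
    have hlog : Real.log (t / s) ≤ t / s - 1 :=
      Real.log_le_sub_one_of_pos (div_pos ht0 hs0)
    have hlog2 : Real.log (t / s) = (Real.log b - Real.log a) / 2 := by
      rw [Real.log_div (ne_of_gt ht0) (ne_of_gt hs0), hs, ht,
        Real.log_sqrt ha, Real.log_sqrt hb]
      ring
    have key : 2 - 2 * (t / s) ≤ Real.log a - Real.log b := by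
      rw [hlog2] at hlog; linarith
    have key2 : 2 * a - 2 * s * t ≤ a * (Real.log a - Real.log b) := by
      have h1 : a * (2 - 2 * (t / s)) = 2 * a - 2 * s * t := by
        rw [← hsa]; field_simp
      have h2 := mul_le_mul_of_nonneg_left key ha
      linarith
    -- now algebra: 2a - 2st ≥ (1/4)(a-b)^2 + a - b
    nlinarith [sq_nonneg (s - t), sq_nonneg (s + t), mul_nonneg (sq_nonneg (s - t)) (sq_nonneg (s + t))]

/-- Generalized Gibbs inequality for sub-probability vectors in ℝ₊ᴺ. -/
theorem generalized_gibbs (N : ℕ) (α β : Fin N → ℝ)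
    (hα : ∀ n, 0 ≤ α n) (hβ : ∀ n, 0 ≤ β n)
    (hαs : ∑ n, α n ≤ 1) (hβs : ∑ n, β n ≤ 1)
    (hdom : ∀ n, β n = 0 → α n = 0) :
    ∑ n, (if α n = 0 then 0 else α n * (Real.log (α n) - Real.log (β n)))
      ≥ (1 / 4) * ∑ n, (α n - β n) ^ 2 + ∑ n, α n - ∑ n, β n := by
  have hrw : (1 / 4) * ∑ n, (α n - β n) ^ 2 + ∑ n, α n - ∑ n, β n
      = ∑ n, ((1 / 4) * (α n - β n) ^ 2 + α n - β n) := by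
    rw [Finset.mul_sum, Finset.sum_sub_distrib, ← Finset.sum_add_distrib]
  rw [hrw]
  apply Finset.sum_le_sum
  intro n _
  have ha1 : α n ≤ 1 := le_trans (Finset.single_le_sum (fun i _ => hα i) (Finset.mem_univ n)) hαs
  have hb1 : β n ≤ 1 := le_trans (Finset.single_le_sum (fun i _ => hβ i) (Finset.mem_univ n)) hβs
  exact gibbs_pointwise (α n) (β n) (hα n) (hβ n) ha1 hb1 (hdom n)
end

section
/- Let μ be a probability measure on ℝ₊ᴺ, ρ > 0 a real number, and c > 0. Suppose ∫ (cρ/|x|) dμ(x) > 1, where |x| = ∑ₙ xⁿ, with conventions cρ/|x| = 0 if cρ = |x| = 0 and +∞ if cρ > 0, |x| = 0. Then there exists a unique z ∈ (0, c] such that ∫ cρ/(zρ + |x|) dμ(x) = 1. -/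
open MeasureTheory ENNReal Filter Topology

section Aux

variable {N : ℕ}

private lemma measurable_sumS : Measurable fun x : Fin N → ℝ => ∑ n, x n :=
  Finset.univ.measurable_sum fun n _ => measurable_pi_apply n

private lemma measurable_F (c ρ z : ℝ) :
    Measurable fun x : Fin N → ℝ =>
      ENNReal.ofReal (c * ρ) / ENNReal.ofReal (z * ρ + ∑ n, x n) :=
  Measurable.div measurable_const ((measurable_sumS.const_add (z * ρ)).ennreal_ofReal)

private lemma sum_nonneg' {x : Fin N → ℝ} (hx : ∀ n, 0 ≤ x n) : 0 ≤ ∑ n, x n :=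
  Finset.sum_nonneg fun n _ => hx n

/-- pointwise antitonicity in `z`. -/
private lemma F_le (c ρ : ℝ) (hρ : 0 < ρ) {z z' : ℝ} (hzz : z ≤ z') {x : Fin N → ℝ} :
    ENNReal.ofReal (c * ρ) / ENNReal.ofReal (z' * ρ + ∑ n, x n)
      ≤ ENNReal.ofReal (c * ρ) / ENNReal.ofReal (z * ρ + ∑ n, x n) := by
  apply ENNReal.div_le_div_left
  exact ENNReal.ofReal_le_ofReal (by nlinarith)

/-- finiteness of the integral for `z > 0`. -/
private lemma lintegral_F_ne_top (μ : Measure (Fin N → ℝ)) [IsProbabilityMeasure μ]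
    (hpos : ∀ᵐ x ∂μ, ∀ n, 0 ≤ x n) (c ρ : ℝ) (hρ : 0 < ρ) {z : ℝ} (hz : 0 < z) :
    ∫⁻ x, ENNReal.ofReal (c * ρ) / ENNReal.ofReal (z * ρ + ∑ n, x n) ∂μ ≠ ∞ := by
  have hb : ∫⁻ x, ENNReal.ofReal (c * ρ) / ENNReal.ofReal (z * ρ + ∑ n, x n) ∂μ
      ≤ ∫⁻ _, ENNReal.ofReal (c * ρ) / ENNReal.ofReal (z * ρ) ∂μ := by
    refine lintegral_mono_ae ?_
    filter_upwards [hpos] with x hx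
    have h0 : 0 ≤ ∑ n, x n := sum_nonneg' hx
    apply ENNReal.div_le_div_left
    exact ENNReal.ofReal_le_ofReal (by linarith)
  refine ne_of_lt (lt_of_le_of_lt hb ?_)
  rw [lintegral_const, measure_univ, mul_one]
  exact ENNReal.div_lt_top ENNReal.ofReal_ne_top
    (ne_of_gt (ENNReal.ofReal_pos.mpr (by positivity)))

end Aux

/-- Existence and uniqueness of the cash-reserve level `z` for the relative growth
optimal strategy.  Divisions are taken in `ℝ≥0∞`, so that `a / 0 = ∞` for `a > 0`
and `0 / 0 = 0`, matching the conventions of the paper. -/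
theorem exists_unique_cash_level (N : ℕ) (μ : Measure (Fin N → ℝ)) [IsProbabilityMeasure μ]
    (hpos : ∀ᵐ x ∂μ, ∀ n, 0 ≤ x n)
    (ρ c : ℝ) (hρ : 0 < ρ) (hc : 0 < c)
    (hΓ : 1 < ∫⁻ x, ENNReal.ofReal (c * ρ) / ENNReal.ofReal (∑ n, x n) ∂μ) :
    ∃! z : ℝ, z ∈ Set.Ioc (0:ℝ) c ∧
      ∫⁻ x, ENNReal.ofReal (c * ρ) / ENNReal.ofReal (z * ρ + ∑ n, x n) ∂μ = 1 := by
  set f : ℝ → ℝ≥0∞ :=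
    fun z => ∫⁻ x, ENNReal.ofReal (c * ρ) / ENNReal.ofReal (z * ρ + ∑ n, x n) ∂μ with hfdef
  have hcρ : 0 < c * ρ := mul_pos hc hρ
  have hnum0 : ENNReal.ofReal (c * ρ) ≠ 0 := (ENNReal.ofReal_pos.mpr hcρ).ne'
  -- strict antitonicity on positive reals
  have hanti : ∀ z₁ z₂ : ℝ, 0 < z₁ → z₁ < z₂ → f z₂ < f z₁ := by
    intro z₁ z₂ h1 h12
    refine lintegral_strict_mono (IsProbabilityMeasure.ne_zero μ)
      (measurable_F c ρ z₁).aemeasurable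
      (lintegral_F_ne_top μ hpos c ρ hρ (h1.trans h12)) ?_
    filter_upwards [hpos] with x hx
    have h0 : 0 ≤ ∑ n, x n := sum_nonneg' hx
    rw [div_eq_mul_inv, div_eq_mul_inv]
    refine ENNReal.mul_lt_mul_right hnum0 ENNReal.ofReal_ne_top ?_
    refine ENNReal.inv_lt_inv.mpr ?_
    rw [ENNReal.ofReal_lt_ofReal_iff (by nlinarith)]
    nlinarith
  -- continuity at every positive point
  have hcont : ∀ w : ℝ, 0 < w → ContinuousAt f w := by
    intro w hw
    have hw2 : 0 < w / 2 := by positivity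
    refine tendsto_lintegral_filter_of_dominated_convergence
      (fun _ => ENNReal.ofReal (c * ρ) / ENNReal.ofReal ((w / 2) * ρ))
      (Eventually.of_forall fun z => measurable_F c ρ z) ?_ ?_ ?_
    · filter_upwards [eventually_gt_nhds (show w / 2 < w by linarith)] with z hz
      filter_upwards [hpos] with x hx
      have h0 : 0 ≤ ∑ n, x n := sum_nonneg' hx
      apply ENNReal.div_le_div_left
      exact ENNReal.ofReal_le_ofReal (by nlinarith)
    · rw [lintegral_const, measure_univ, mul_one]
      exact (ENNReal.div_lt_top ENNReal.ofReal_ne_top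
        (ne_of_gt (ENNReal.ofReal_pos.mpr (by positivity)))).ne
    · refine Eventually.of_forall fun x => ?_
      refine ENNReal.Tendsto.const_div ?_ (Or.inl ENNReal.ofReal_ne_top)
      exact ENNReal.tendsto_ofReal
        (((continuous_id.mul continuous_const).add continuous_const).tendsto w)
  -- behaviour near zero : along the sequence `c / (n+1)` the integrals converge to `Γ`
  have hseq : Tendsto (fun n : ℕ => f (c / ((n : ℝ) + 1))) atTop
      (𝓝 (∫⁻ x, ENNReal.ofReal (c * ρ) / ENNReal.ofReal (∑ n, x n) ∂μ)) := by
    refine lintegral_tendsto_of_tendsto_of_monotone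
      (fun n => (measurable_F c ρ _).aemeasurable) ?_ ?_
    · refine Eventually.of_forall fun x => ?_
      intro m n hmn
      refine F_le c ρ hρ ?_
      refine div_le_div_of_nonneg_left hc.le (by positivity) ?_
      exact add_le_add_left (Nat.cast_le.mpr hmn) 1
    · refine Eventually.of_forall fun x => ?_
      refine ENNReal.Tendsto.const_div ?_ (Or.inl ENNReal.ofReal_ne_top)
      refine ENNReal.tendsto_ofReal ?_
      have h0 : Tendsto (fun n : ℕ => c / ((n : ℝ) + 1) * ρ + ∑ i, x i) atTop
          (𝓝 (0 * ρ + ∑ i, x i)) := by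
        refine Tendsto.add_const _ (Tendsto.mul_const ρ ?_)
        simpa [div_eq_mul_inv, one_div] using
          tendsto_one_div_add_atTop_nhds_zero_nat.const_mul c
      simpa using h0
  -- pick a small `z₀` with `f z₀ > 1`
  obtain ⟨n, hn⟩ := (hseq.eventually (eventually_gt_nhds hΓ)).exists
  set z₀ : ℝ := c / ((n : ℝ) + 1) with hz₀def
  have hz₀pos : 0 < z₀ := by positivity
  have hz₀c : z₀ ≤ c := by
    rw [hz₀def]
    exact div_le_self hc.le (by simp [le_add_iff_nonneg_left])
  -- `f c ≤ 1`
  have hfc : f c ≤ 1 := by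
    have h1 : f c ≤ ∫⁻ _, 1 ∂μ := by
      refine lintegral_mono_ae ?_
      filter_upwards [hpos] with x hx
      have h0 : 0 ≤ ∑ n, x n := sum_nonneg' hx
      refine ENNReal.div_le_of_le_mul ?_
      rw [one_mul]
      exact ENNReal.ofReal_le_ofReal (by linarith)
    simpa using h1
  -- intermediate value theorem on `[z₀, c]`
  have hsub : Set.Icc (f c) (f z₀) ⊆ f '' Set.Icc z₀ c := by
    refine intermediate_value_Icc' hz₀c fun w hw => ?_
    exact (hcont w (lt_of_lt_of_le hz₀pos hw.1)).continuousWithinAt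
  obtain ⟨z, hzmem, hz1⟩ := hsub ⟨hfc, hn.le⟩
  refine ⟨z, ⟨⟨lt_of_lt_of_le hz₀pos hzmem.1, hzmem.2⟩, hz1⟩, ?_⟩
  rintro y ⟨⟨hy0, _⟩, hy1⟩
  rcases lt_trichotomy y z with h | h | h
  · exact absurd (hanti y z hy0 h) (by rw [hz1, show f y = 1 from hy1]; exact lt_irrefl 1)
  · exact h
  · exact absurd (hanti z y (lt_of_lt_of_le hz₀pos hzmem.1) h)
      (by rw [hz1, show f y = 1 from hy1]; exact lt_irrefl 1)
end

section
/- Fix r ∈ (0,1], a probability measure μ on ℝ₊ᴺ, ρ ≥ 0, ζ ≥ 0, ζ̃ ≥ 0, W > 0 with ζ satisfying ∫ ρW/(ζρ + |x|) dμ(x) = 1 if ζ > 0 and ∫ ρW/|x| dμ(x) ≤ 1 if ζ = 0, and vectors λ, λ̃ ∈ ℝ₊ᴺ with |λ| = 1 − ζ/W, |λ̃| = 1 − ζ̃/W, λⁿ = ∫ xⁿ/(ζρ + |x|) dμ(x) for each n, and μ({x : xⁿ > 0}) = 0 whenever λⁿ = 0. Define F ∈ ℝ₊ᴺ by Fⁿ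 = λⁿ/(rλⁿ + (1−r)λ̃ⁿ) (with 0/0 = 0) and f(x) = ln((ζρ + Fx)/(rζρ + (1−r)ζ̃ρ + |x|)). Then ∫ f(x) dμ(x) ≥ (1/4)(1−r)² ‖λ − λ̃‖², where ‖·‖ is the Euclidean norm. -/
open MeasureTheory ENNReal

lemma log_ineq_two {u : ℝ} (hu : 1 ≤ u) : Real.log u ≤ (u - 1/u) / 2 := by
  have h := Real.self_le_sinh_iff.mpr (Real.log_nonneg hu)
  rw [Real.sinh_log (by linarith : (0:ℝ) < u)] at h
  simpa [one_div] using h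

lemma log_ineq_one {t : ℝ} (ht : 1 ≤ t) : 2 * (t - 1) / (t + 1) ≤ Real.log t := by
  set φ : ℝ → ℝ := fun t => Real.log t - 2 * (t - 1) / (t + 1) with hφ
  have hder : ∀ x : ℝ, 1 < x →
      HasDerivAt φ (x⁻¹ - (2 * (x + 1) - 2 * (x - 1) * 1) / (x + 1) ^ 2) x := by
    intro x hx
    have hnum : HasDerivAt (fun t : ℝ => 2 * (t - 1)) 2 x := by
      simpa using ((hasDerivAt_id x).sub_const 1).const_mul 2
    have hden : HasDerivAt (fun t : ℝ => t + 1) 1 x := (hasDerivAt_id x).add_const 1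
    exact (Real.hasDerivAt_log (by linarith)).sub (hnum.div hden (by linarith))
  have hmono : MonotoneOn φ (Set.Ici 1) := by
    apply monotoneOn_of_deriv_nonneg (convex_Ici 1)
    · apply ContinuousOn.sub
      · exact Real.continuousOn_log.mono (by intro x hx; simp at hx ⊢; intro h; rw [h] at hx; linarith)
      · apply ContinuousOn.div (by fun_prop) (by fun_prop)
        intro x hx; simp at hx; intro h; linarith
    · intro x hx
      rw [interior_Ici] at hx
      exact ((hder x hx).differentiableAt).differentiableWithinAt
    · intro x hx
      rw [interior_Ici] at hx
      have hx' : 1 < x := hx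
      rw [(hder x hx').deriv]
      have hx0 : x ≠ 0 := by linarith
      have hx1 : x + 1 ≠ 0 := by linarith
      have : x⁻¹ - (2 * (x + 1) - 2 * (x - 1) * 1) / (x + 1) ^ 2
          = (x - 1) ^ 2 / (x * (x + 1) ^ 2) := by field_simp; ring
      rw [this]
      apply div_nonneg (sq_nonneg _)
      positivity
  have h1 := hmono (by simp : (1:ℝ) ∈ Set.Ici 1) (by simpa using ht) ht
  simp only [hφ, Real.log_one] at h1
  linarith [h1]

lemma scalar_ineq {a b : ℝ} (ha0 : 0 ≤ a) (ha1 : a ≤ 1) (hb0 : 0 ≤ b) (hb1 : b ≤ 1)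
    (hab : b = 0 → a = 0) :
    (a - b) ^ 2 / 4 ≤ a * Real.log (a / b) - (a - b) := by
  rcases eq_or_lt_of_le ha0 with ha | ha
  · -- a = 0
    rw [← ha]
    simp only [zero_sub, zero_mul, zero_div, Real.log_zero]
    nlinarith
  rcases eq_or_lt_of_le hb0 with hb | hb
  · exact absurd (hab hb.symm) (by linarith)
  rcases le_total a b with h | h
  · -- a ≤ b
    have hu : 1 ≤ b / a := (one_le_div ha).2 h
    have h2 := log_ineq_two hu
    have e1 : Real.log (a / b) = -Real.log (b / a) := by
      rw [← Real.log_inv]; congr 1; rw [inv_div]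
    have e2 : a * ((b / a - 1 / (b / a)) / 2) = (b ^ 2 - a ^ 2) / (2 * b) := by
      field_simp
    have e3 : (a ^ 2 - b ^ 2) / (2 * b) - (a - b) - (a - b) ^ 2 / 4
        = (a - b) ^ 2 * (2 - b) / (4 * b) := by field_simp; ring
    have h4 : a * Real.log (b / a) ≤ (b ^ 2 - a ^ 2) / (2 * b) := by
      calc a * Real.log (b / a) ≤ a * ((b / a - 1 / (b / a)) / 2) :=
            mul_le_mul_of_nonneg_left h2 ha0
        _ = (b ^ 2 - a ^ 2) / (2 * b) := e2
    have h5 : 0 ≤ (a - b) ^ 2 * (2 - b) / (4 * b) :=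
      div_nonneg (mul_nonneg (sq_nonneg _) (by linarith)) (by linarith)
    rw [e1]
    have h6 : a * -Real.log (b / a) = -(a * Real.log (b / a)) := by ring
    have e4 : (a ^ 2 - b ^ 2) / (2 * b) = -((b ^ 2 - a ^ 2) / (2 * b)) := by ring
    linarith [h4, h5, e3.le, e3.ge, h6.le, h6.ge, e4.le, e4.ge]
  · -- b ≤ a
    have ht : 1 ≤ a / b := (one_le_div hb).2 h
    have h1 := log_ineq_one ht
    have e2 : a * (2 * (a / b - 1) / (a / b + 1)) = 2 * a * (a - b) / (a + b) := by
      have hab0 : a + b ≠ 0 := by linarith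
      field_simp
    have e3 : 2 * a * (a - b) / (a + b) - (a - b) - (a - b) ^ 2 / 4
        = (a - b) ^ 2 * (4 - (a + b)) / (4 * (a + b)) := by
      have hab0 : a + b ≠ 0 := by linarith
      field_simp; ring
    have h4 : 2 * a * (a - b) / (a + b) ≤ a * Real.log (a / b) := by
      calc 2 * a * (a - b) / (a + b) = a * (2 * (a / b - 1) / (a / b + 1)) := e2.symm
        _ ≤ a * Real.log (a / b) := mul_le_mul_of_nonneg_left h1 ha0
    have h5 : 0 ≤ (a - b) ^ 2 * (4 - (a + b)) / (4 * (a + b)) := by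
      apply div_nonneg (mul_nonneg (sq_nonneg _) (by linarith)) (by linarith)
    linarith [h4, h5, e3.le, e3.ge]

lemma gibbs_ineq {N : ℕ} (w z : Fin N → ℝ) (c : ℝ) (hc : 0 ≤ c) (hw : ∀ n, 0 ≤ w n)
    (hz : ∀ n, 0 ≤ z n) (hwz : ∀ n, 0 < w n → 0 < z n)
    (hsum : c + ∑ n, w n = 1) (hpos : 0 < c + ∑ n, w n * z n) :
    ∑ n, w n * Real.log (z n) ≤ Real.log (c + ∑ n, w n * z n) := by
  rw [Real.le_log_iff_exp_le hpos]
  have hprod : ∀ n, Real.exp (w n * Real.log (z n)) = z n ^ (w n) := by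
    intro n
    rcases eq_or_lt_of_le (hz n) with h | h
    · have hw0 : w n = 0 := by
        by_contra hw0
        exact absurd (hwz n (lt_of_le_of_ne (hw n) (Ne.symm hw0))) (by rw [← h]; simp)
      simp [hw0]
    · rw [Real.rpow_def_of_pos h]; ring_nf
  rw [Real.exp_sum]
  have key : ∏ n, z n ^ (w n) ≤ c + ∑ n, w n * z n := by
    have := Real.geom_mean_le_arith_mean_weighted (Finset.univ : Finset (Option (Fin N)))
      (fun o => o.elim c w) (fun o => o.elim 1 z)
      (fun o _ => by cases o <;> simp [hc, hw])
      (by simpa [Fintype.sum_option] using hsum)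
      (fun o _ => by cases o <;> simp [hz])
    simpa [Fintype.prod_option, Fintype.sum_option] using this
  calc ∏ n, Real.exp (w n * Real.log (z n)) = ∏ n, z n ^ (w n) := by
        exact Finset.prod_congr rfl (fun n _ => hprod n)
    _ ≤ c + ∑ n, w n * z n := key

set_option maxHeartbeats 1000000 in
/-- Core one-step inequality for relative growth optimality: the expected increment of
the log relative wealth is bounded below by `(1/4)(1-r)² ‖λ - λ̃‖²`.  Divisions in the
hypotheses on `ζ` are taken in `ℝ≥0∞` to encode the conventions `0/0 = 0`,
`a/0 = +∞`. -/
theorem one_step_inequality (N : ℕ) (μ : Measure (Fin N → ℝ))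
    [IsProbabilityMeasure μ] (hμpos : ∀ᵐ x ∂μ, ∀ n, 0 ≤ x n)
    (r ρ ζ ζt W : ℝ) (hr : r ∈ Set.Ioc (0:ℝ) 1) (hρ : 0 ≤ ρ)
    (hζ : 0 ≤ ζ) (hζt : 0 ≤ ζt) (hW : 0 < W)
    (hζ_eq : 0 < ζ →
      ∫⁻ x, ENNReal.ofReal (ρ * W) / ENNReal.ofReal (ζ * ρ + ∑ n, x n) ∂μ = 1)
    (hζ_zero : ζ = 0 →
      ∫⁻ x, ENNReal.ofReal (ρ * W) / ENNReal.ofReal (∑ n, x n) ∂μ ≤ 1)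
    (lam lamt : Fin N → ℝ)
    (hlam_nonneg : ∀ n, 0 ≤ lam n) (hlamt_nonneg : ∀ n, 0 ≤ lamt n)
    (hlam_sum : ∑ n, lam n = 1 - ζ / W)
    (hlamt_sum : ∑ n, lamt n = 1 - ζt / W)
    (hlam_def : ∀ n, lam n = ∫ x, x n / (ζ * ρ + ∑ k, x k) ∂μ)
    (hnull : ∀ n, lam n = 0 → μ {x | 0 < x n} = 0)
    (F : Fin N → ℝ) (hF : ∀ n, F n = lam n / (r * lam n + (1 - r) * lamt n))
    (f : (Fin N → ℝ) → ℝ)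
    (hf : ∀ x, f x = Real.log
      ((ζ * ρ + ∑ n, F n * x n) / (r * ζ * ρ + (1 - r) * ζt * ρ + ∑ n, x n))) :
    (1 / 4) * (1 - r) ^ 2 * ∑ n, (lam n - lamt n) ^ 2 ≤ ∫ x, f x ∂μ := by
  obtain ⟨hr0, hr1⟩ := hr
  have hr1' : (0:ℝ) ≤ 1 - r := by linarith
  have hζρ : (0:ℝ) ≤ ζ * ρ := mul_nonneg hζ hρ
  -- facts about F
  have hb_nonneg : ∀ n, 0 ≤ r * lam n + (1 - r) * lamt n := fun n => by
    nlinarith [hlam_nonneg n, hlamt_nonneg n]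
  have hF_nonneg : ∀ n, 0 ≤ F n := fun n => by
    rw [hF]; exact div_nonneg (hlam_nonneg n) (hb_nonneg n)
  have hF_pos : ∀ n, 0 < lam n → 0 < F n := fun n hn => by
    rw [hF]; apply div_pos hn; nlinarith [hlamt_nonneg n]
  have hF_zero : ∀ n, lam n = 0 → F n = 0 := fun n hn => by rw [hF, hn, zero_div]
  have hrF : ∀ n, r * F n ≤ 1 := by
    intro n
    rcases eq_or_lt_of_le (hlam_nonneg n) with h | h
    · rw [hF_zero n h.symm]; linarith
    · rw [hF]
      have hbpos : 0 < r * lam n + (1 - r) * lamt n := by nlinarith [hlamt_nonneg n]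
      have e : r * (lam n / (r * lam n + (1 - r) * lamt n))
          = (r * lam n) / (r * lam n + (1 - r) * lamt n) := by ring
      rw [e, div_le_one hbpos]; nlinarith [hlamt_nonneg n]
  have hlam_le : ∀ n, lam n ≤ 1 := by
    intro n
    have h1 : lam n ≤ ∑ k, lam k :=
      Finset.single_le_sum (fun i _ => hlam_nonneg i) (Finset.mem_univ n)
    have h2 : 0 ≤ ζ / W := div_nonneg hζ hW.le
    rw [hlam_sum] at h1; linarith
  have hlamt_le : ∀ n, lamt n ≤ 1 := by
    intro n
    have h1 : lamt n ≤ ∑ k, lamt k :=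
      Finset.single_le_sum (fun i _ => hlamt_nonneg i) (Finset.mem_univ n)
    have h2 : 0 ≤ ζt / W := div_nonneg hζt hW.le
    rw [hlamt_sum] at h1; linarith
  -- a.e. good set
  have hE : ∀ᵐ x ∂μ, (∀ n, 0 ≤ x n) ∧ ∀ n, lam n = 0 → x n = 0 := by
    have h2 : ∀ᵐ x ∂μ, ∀ n, lam n = 0 → ¬(0 < x n) := by
      rw [ae_all_iff]
      intro n
      by_cases hn : lam n = 0
      · rw [ae_iff]; simpa [hn] using hnull n hn
      · filter_upwards with x hx; exact absurd hx hn
    filter_upwards [hμpos, h2] with x h1 h2'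
    exact ⟨h1, fun n hn => le_antisymm (not_lt.1 (h2' n hn)) (h1 n)⟩
  have hs_nonneg : ∀ x : Fin N → ℝ, (∀ n, 0 ≤ x n) → 0 ≤ ζ * ρ + ∑ n, x n := by
    intro x hx
    have h1 : (0:ℝ) ≤ ∑ n, x n := Finset.sum_nonneg fun n _ => hx n
    linarith
  -- pointwise inequality g ≤ f on the good set
  have key_pt : ∀ x : Fin N → ℝ, (∀ n, 0 ≤ x n) → (∀ n, lam n = 0 → x n = 0) →
      (∑ n, (x n / (ζ * ρ + ∑ k, x k)) * Real.log (F n))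
        + ((1 - r) * (ζ - ζt)) * (ρ / (ζ * ρ + ∑ k, x k)) ≤ f x := by
    intro x hx hx0
    have hsum_nonneg : (0:ℝ) ≤ ∑ k, x k := Finset.sum_nonneg fun n _ => hx n
    have hsx : 0 ≤ ζ * ρ + ∑ k, x k := hs_nonneg x hx
    rcases eq_or_lt_of_le hsx with hs0 | hs0
    · -- s x = 0 : both sides vanish
      have h1 : ∑ k, x k = 0 := by linarith
      have hxn : ∀ n, x n = 0 := fun n =>
        (Finset.sum_eq_zero_iff_of_nonneg (fun i _ => hx i)).1 h1 n (Finset.mem_univ n)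
      have hζρ0 : ζ * ρ = 0 := by linarith
      have hfx : f x = 0 := by
        rw [hf]
        have h3 : (∑ n, F n * x n) = 0 := Finset.sum_eq_zero fun n _ => by rw [hxn n, mul_zero]
        rw [h3, hζρ0]
        simp
      rw [hfx, ← hs0]
      have : ∀ n ∈ Finset.univ, (x n / (0:ℝ)) * Real.log (F n) = 0 := fun n _ => by
        rw [hxn n]; simp
      rw [Finset.sum_congr rfl this]
      simp
    · -- 0 < s x
      have hsne : ζ * ρ + ∑ k, x k ≠ 0 := ne_of_gt hs0
      have hnum_nonneg : 0 ≤ ζ * ρ + ∑ n, F n * x n :=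
        add_nonneg hζρ (Finset.sum_nonneg fun n _ => mul_nonneg (hF_nonneg n) (hx n))
      have hnum_pos : 0 < ζ * ρ + ∑ n, F n * x n := by
        rcases eq_or_lt_of_le hζρ with h0 | h0
        · have hsum_pos : 0 < ∑ k, x k := by linarith
          obtain ⟨n, hn⟩ : ∃ n, 0 < x n := by
            by_contra hcon
            push_neg at hcon
            have : ∑ k, x k = 0 :=
              Finset.sum_eq_zero fun n _ => le_antisymm (hcon n) (hx n)
            linarith
          have hlamn : 0 < lam n := by
            rcases eq_or_lt_of_le (hlam_nonneg n) with h | h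
            · exact absurd (hx0 n h.symm) (ne_of_gt hn)
            · exact h
          have h2 : 0 < F n * x n := mul_pos (hF_pos n hlamn) hn
          have hle : F n * x n ≤ ∑ k, F k * x k :=
            Finset.single_le_sum (fun i _ => mul_nonneg (hF_nonneg i) (hx i)) (Finset.mem_univ n)
          linarith
        · have : (0:ℝ) ≤ ∑ n, F n * x n :=
            Finset.sum_nonneg fun n _ => mul_nonneg (hF_nonneg n) (hx n)
          linarith
      have hD_pos : 0 < r * ζ * ρ + (1 - r) * ζt * ρ + ∑ k, x k := by
        have h1 : r * (ζ * ρ + ∑ k, x k) ≤ r * ζ * ρ + (1 - r) * ζt * ρ + ∑ k, x k := by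
          nlinarith [mul_nonneg (mul_nonneg hr1' hζt) hρ]
        nlinarith [mul_pos hr0 hs0]
      have hDne : r * ζ * ρ + (1 - r) * ζt * ρ + ∑ k, x k ≠ 0 := ne_of_gt hD_pos
      -- split
      have hsplit : f x = Real.log ((ζ * ρ + ∑ n, F n * x n) / (ζ * ρ + ∑ k, x k))
          + Real.log ((ζ * ρ + ∑ k, x k) / (r * ζ * ρ + (1 - r) * ζt * ρ + ∑ k, x k)) := by
        rw [hf]
        rw [← Real.log_mul (ne_of_gt (div_pos hnum_pos hs0)) (ne_of_gt (div_pos hs0 hD_pos))]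
        congr 1
        rw [div_mul_div_comm,
          mul_comm (ζ * ρ + ∑ k, x k) (r * ζ * ρ + (1 - r) * ζt * ρ + ∑ k, x k),
          mul_div_mul_right _ _ hsne]
      -- Gibbs part
      have hb1 : ∑ n, (x n / (ζ * ρ + ∑ k, x k)) * Real.log (F n)
          ≤ Real.log ((ζ * ρ + ∑ n, F n * x n) / (ζ * ρ + ∑ k, x k)) := by
        have hsum1 : ζ * ρ / (ζ * ρ + ∑ k, x k) + ∑ n, x n / (ζ * ρ + ∑ k, x k) = 1 := by
          rw [← Finset.sum_div, ← add_div, div_self hsne]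
        have heq : ζ * ρ / (ζ * ρ + ∑ k, x k)
            + ∑ n, (x n / (ζ * ρ + ∑ k, x k)) * F n
            = (ζ * ρ + ∑ n, F n * x n) / (ζ * ρ + ∑ k, x k) := by
          have h4 : ∀ n ∈ Finset.univ, (x n / (ζ * ρ + ∑ k, x k)) * F n
              = (F n * x n) / (ζ * ρ + ∑ k, x k) := fun n _ => by ring
          rw [Finset.sum_congr rfl h4, ← Finset.sum_div, ← add_div]
        have hwz : ∀ n, 0 < x n / (ζ * ρ + ∑ k, x k) → 0 < F n := by
          intro n hn
          have hxn : 0 < x n := by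
            by_contra hxx
            push_neg at hxx
            have hz : x n = 0 := le_antisymm hxx (hx n)
            rw [hz, zero_div] at hn
            exact lt_irrefl _ hn
          have hlamn : 0 < lam n := by
            rcases eq_or_lt_of_le (hlam_nonneg n) with h | h
            · exact absurd (hx0 n h.symm) (ne_of_gt hxn)
            · exact h
          exact hF_pos n hlamn
        have hgb := gibbs_ineq (fun n => x n / (ζ * ρ + ∑ k, x k)) F
          (ζ * ρ / (ζ * ρ + ∑ k, x k))
          (div_nonneg hζρ hsx) (fun n => div_nonneg (hx n) hsx) hF_nonneg hwz hsum1
          (by rw [heq]; exact div_pos hnum_pos hs0)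
        rw [heq] at hgb
        exact hgb
      -- cash part
      have hb2 : ((1 - r) * (ζ - ζt)) * (ρ / (ζ * ρ + ∑ k, x k))
          ≤ Real.log ((ζ * ρ + ∑ k, x k) / (r * ζ * ρ + (1 - r) * ζt * ρ + ∑ k, x k)) := by
        have h1 : Real.log ((r * ζ * ρ + (1 - r) * ζt * ρ + ∑ k, x k) / (ζ * ρ + ∑ k, x k))
            ≤ (r * ζ * ρ + (1 - r) * ζt * ρ + ∑ k, x k) / (ζ * ρ + ∑ k, x k) - 1 :=
          Real.log_le_sub_one_of_pos (div_pos hD_pos hs0)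
        have h2 : Real.log ((ζ * ρ + ∑ k, x k) / (r * ζ * ρ + (1 - r) * ζt * ρ + ∑ k, x k))
            = -Real.log ((r * ζ * ρ + (1 - r) * ζt * ρ + ∑ k, x k) / (ζ * ρ + ∑ k, x k)) := by
          rw [← Real.log_inv]; congr 1; rw [inv_div]
        have h3 : ((1 - r) * (ζ - ζt)) * (ρ / (ζ * ρ + ∑ k, x k))
            = 1 - (r * ζ * ρ + (1 - r) * ζt * ρ + ∑ k, x k) / (ζ * ρ + ∑ k, x k) := by
          field_simp
          ring
        rw [h2, h3]; linarith
      rw [hsplit]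
      exact add_le_add hb1 hb2
  -- upper bound for f
  have h1r : (1:ℝ) ≤ 1 / r := by rw [le_div_iff₀ hr0]; linarith
  have hfC : ∀ x : Fin N → ℝ, (∀ n, 0 ≤ x n) → f x ≤ Real.log (1 / r) := by
    intro x hx
    have hsum_nonneg : (0:ℝ) ≤ ∑ n, x n := Finset.sum_nonneg fun n _ => hx n
    have hnum_nonneg : 0 ≤ ζ * ρ + ∑ n, F n * x n :=
      add_nonneg hζρ (Finset.sum_nonneg fun n _ => mul_nonneg (hF_nonneg n) (hx n))
    have hD_nonneg : (0:ℝ) ≤ r * ζ * ρ + (1 - r) * ζt * ρ + ∑ n, x n := by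
      nlinarith [mul_nonneg (mul_nonneg hr1' hζt) hρ, mul_nonneg hr0.le hζρ]
    have hrnum : r * (ζ * ρ + ∑ n, F n * x n)
        ≤ r * ζ * ρ + (1 - r) * ζt * ρ + ∑ n, x n := by
      have h1 : ∑ n, r * (F n * x n) ≤ ∑ n, x n := by
        apply Finset.sum_le_sum
        intro n _
        nlinarith [hrF n, hx n, mul_nonneg (hF_nonneg n) (hx n)]
      have h2 : r * (ζ * ρ + ∑ n, F n * x n) = r * (ζ * ρ) + ∑ n, r * (F n * x n) := by
        rw [mul_add, Finset.mul_sum]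
      rw [h2]
      nlinarith [mul_nonneg (mul_nonneg hr1' hζt) hρ]
    rw [hf]
    rcases eq_or_lt_of_le hD_nonneg with hD0 | hD0
    · have hnum0 : ζ * ρ + ∑ n, F n * x n = 0 := by nlinarith
      rw [hnum0, zero_div, Real.log_zero]
      exact Real.log_nonneg h1r
    · rcases eq_or_lt_of_le hnum_nonneg with hn0 | hn0
      · rw [← hn0, zero_div, Real.log_zero]
        exact Real.log_nonneg h1r
      · have hle : (ζ * ρ + ∑ n, F n * x n) / (r * ζ * ρ + (1 - r) * ζt * ρ + ∑ n, x n)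
            ≤ 1 / r := by
          rw [div_le_div_iff₀ hD0 hr0]; linarith
        exact Real.log_le_log (div_pos hn0 hD0) hle
  -- measurability
  have hmeas_sum : Measurable (fun x : Fin N → ℝ => ∑ k, x k) :=
    Finset.measurable_sum _ fun n _ => measurable_pi_apply n
  have hmeas_s : Measurable (fun x : Fin N → ℝ => ζ * ρ + ∑ k, x k) :=
    measurable_const.add hmeas_sum
  have hf_meas : AEStronglyMeasurable f μ := by
    have he : f = fun x => Real.log
        ((ζ * ρ + ∑ n, F n * x n) / (r * ζ * ρ + (1 - r) * ζt * ρ + ∑ n, x n)) := funext hf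
    rw [he]
    exact (Real.measurable_log.comp ((measurable_const.add
      (Finset.measurable_sum _ fun n _ => (by fun_prop : Measurable fun x : Fin N → ℝ => F n * x n))).div
      (measurable_const.add hmeas_sum))).aestronglyMeasurable
  have hw_meas : ∀ n : Fin N, Measurable (fun x : Fin N → ℝ => x n / (ζ * ρ + ∑ k, x k)) :=
    fun n => (measurable_pi_apply n).div hmeas_s
  have hw_int : ∀ n : Fin N, Integrable (fun x => x n / (ζ * ρ + ∑ k, x k)) μ := by
    intro n
    apply Integrable.mono' (integrable_const (1:ℝ)) (hw_meas n).aestronglyMeasurable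
    filter_upwards [hμpos] with x hx
    have h0 : 0 ≤ x n / (ζ * ρ + ∑ k, x k) := div_nonneg (hx n) (hs_nonneg x hx)
    rw [Real.norm_eq_abs, abs_of_nonneg h0]
    apply div_le_one_of_le₀ _ (hs_nonneg x hx)
    have h1 : x n ≤ ∑ k, x k := Finset.single_le_sum (fun i _ => hx i) (Finset.mem_univ n)
    linarith
  -- the cash integral
  obtain ⟨hρs_int, hI_ge⟩ : Integrable (fun x => ρ / (ζ * ρ + ∑ k, x k)) μ ∧
      (1 - r) * (ζ - ζt) * (1 / W)
        ≤ (1 - r) * (ζ - ζt) * ∫ x, ρ / (ζ * ρ + ∑ k, x k) ∂μ := by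
    have hmeas_ρs : Measurable (fun x : Fin N → ℝ => ρ / (ζ * ρ + ∑ k, x k)) :=
      measurable_const.div hmeas_s
    have hmeas_ρWs : Measurable (fun x : Fin N → ℝ => ρ * W / (ζ * ρ + ∑ k, x k)) :=
      measurable_const.div hmeas_s
    by_cases hζpos : 0 < ζ
    · -- the case ζ > 0 : exact identity from the defining equation
      have h1 := hζ_eq hζpos
      have hρpos : 0 < ρ := by
        rcases eq_or_lt_of_le hρ with h | h
        · exfalso; rw [← h] at h1; simp at h1
        · exact h
      have hζρpos : 0 < ζ * ρ := mul_pos hζpos hρpos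
      have hae : ∀ᵐ x ∂μ, 0 < ζ * ρ + ∑ k, x k := by
        filter_upwards [hμpos] with x hx
        have h2 : (0:ℝ) ≤ ∑ k, x k := Finset.sum_nonneg fun n _ => hx n
        linarith
      have h2 : ∫⁻ x, ENNReal.ofReal (ρ * W / (ζ * ρ + ∑ k, x k)) ∂μ = 1 := by
        rw [← h1]
        apply lintegral_congr_ae
        filter_upwards [hae] with x hx
        rw [ENNReal.ofReal_div_of_pos hx]
      have hint : Integrable (fun x => ρ / (ζ * ρ + ∑ k, x k)) μ := by
        apply Integrable.mono' (integrable_const (1 / ζ)) hmeas_ρs.aestronglyMeasurable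
        filter_upwards [hμpos, hae] with x hx0 hx
        have hsum0 : (0:ℝ) ≤ ∑ k, x k := Finset.sum_nonneg fun n _ => hx0 n
        rw [Real.norm_eq_abs, abs_of_nonneg (div_nonneg hρ hx.le)]
        rw [div_le_div_iff₀ hx hζpos]
        nlinarith [hsum0, hζρpos]
      have hint2 : Integrable (fun x => ρ * W / (ζ * ρ + ∑ k, x k)) μ := by
        have e : (fun x : Fin N → ℝ => ρ * W / (ζ * ρ + ∑ k, x k))
            = fun x => (ρ / (ζ * ρ + ∑ k, x k)) * W := by
          funext x; ring
        rw [e]; exact hint.mul_const W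
      have h3 : ∫ x, ρ * W / (ζ * ρ + ∑ k, x k) ∂μ = 1 := by
        rw [MeasureTheory.integral_eq_lintegral_of_nonneg_ae
          (by filter_upwards [hae] with x hx; exact div_nonneg (mul_nonneg hρ hW.le) hx.le)
          hmeas_ρWs.aestronglyMeasurable, h2]
        simp
      have h5 : ∫ x, ρ / (ζ * ρ + ∑ k, x k) ∂μ = 1 / W := by
        have e : (fun x : Fin N → ℝ => ρ / (ζ * ρ + ∑ k, x k))
            = fun x => (ρ * W / (ζ * ρ + ∑ k, x k)) * (1 / W) := by
          funext x
          rw [div_mul_eq_mul_div]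
          congr 1
          field_simp
        rw [e, integral_mul_const, h3, one_mul]
      exact ⟨hint, by rw [h5]⟩
    · -- the case ζ = 0 : inequality from the defining inequality
      have hζ0 : ζ = 0 := le_antisymm (not_lt.1 hζpos) hζ
      have h1 := hζ_zero hζ0
      have hζρ0 : ζ * ρ = 0 := by rw [hζ0, zero_mul]
      have hfac : (1 - r) * (ζ - ζt) ≤ 0 := by nlinarith
      by_cases hρ0 : ρ = 0
      · have e : (fun x : Fin N → ℝ => ρ / (ζ * ρ + ∑ k, x k)) = fun _ => 0 := by
          funext x; rw [hρ0, zero_div]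
        refine ⟨by rw [e]; exact integrable_const 0, ?_⟩
        rw [e, integral_zero, mul_zero]
        have hWpos : (0:ℝ) < 1 / W := by positivity
        nlinarith [hfac, hWpos]
      · have hρpos : 0 < ρ := lt_of_le_of_ne hρ (Ne.symm hρ0)
        have hρW : 0 < ρ * W := mul_pos hρpos hW
        -- the sum is a.e. positive
        have hZm : MeasurableSet {x : Fin N → ℝ | (∑ k, x k) ≤ 0} :=
          measurableSet_le hmeas_sum measurable_const
        have hZ0 : μ {x : Fin N → ℝ | (∑ k, x k) ≤ 0} = 0 := by
          by_contra hZ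
          have hle := MeasureTheory.setLIntegral_le_lintegral (μ := μ)
            {x : Fin N → ℝ | (∑ k, x k) ≤ 0}
            (fun x => ENNReal.ofReal (ρ * W) / ENNReal.ofReal (∑ n, x n))
          have heqZ : ∫⁻ x in {x : Fin N → ℝ | (∑ k, x k) ≤ 0},
              ENNReal.ofReal (ρ * W) / ENNReal.ofReal (∑ n, x n) ∂μ
              = ⊤ * μ {x : Fin N → ℝ | (∑ k, x k) ≤ 0} := by
            rw [MeasureTheory.setLIntegral_congr_fun hZm
              (fun x (hx : (∑ k, x k) ≤ 0) => ?_),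
              MeasureTheory.setLIntegral_const]
            rw [ENNReal.ofReal_eq_zero.2 hx, ENNReal.div_zero (ne_of_gt (ENNReal.ofReal_pos.2 hρW))]
          rw [heqZ, ENNReal.top_mul hZ] at hle
          exact absurd (le_trans hle h1) (by simp)
        have hae : ∀ᵐ x ∂μ, 0 < ∑ k, x k := by
          rw [ae_iff]
          convert hZ0 using 2
          ext x
          simp
        have hae' : ∀ᵐ x ∂μ, 0 < ζ * ρ + ∑ k, x k := by
          filter_upwards [hae] with x hx
          rw [hζρ0, zero_add]; exact hx
        have h2 : ∫⁻ x, ENNReal.ofReal (ρ * W / (ζ * ρ + ∑ k, x k)) ∂μ ≤ 1 := by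
          refine le_trans (le_of_eq (lintegral_congr_ae ?_)) h1
          filter_upwards [hae] with x hx
          rw [hζρ0, zero_add, ENNReal.ofReal_div_of_pos hx]
        have hnn : 0 ≤ᵐ[μ] fun x : Fin N → ℝ => ρ * W / (ζ * ρ + ∑ k, x k) := by
          filter_upwards [hae'] with x hx
          exact div_nonneg hρW.le hx.le
        have hint2 : Integrable (fun x => ρ * W / (ζ * ρ + ∑ k, x k)) μ := by
          refine ⟨hmeas_ρWs.aestronglyMeasurable, ?_⟩
          rw [MeasureTheory.hasFiniteIntegral_iff_ofReal hnn]
          exact lt_of_le_of_lt h2 ENNReal.one_lt_top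
        have h3 : ∫ x, ρ * W / (ζ * ρ + ∑ k, x k) ∂μ ≤ 1 := by
          rw [MeasureTheory.integral_eq_lintegral_of_nonneg_ae hnn
            hmeas_ρWs.aestronglyMeasurable]
          have h4 := ENNReal.toReal_mono ENNReal.one_ne_top h2
          simpa using h4
        have e : (fun x : Fin N → ℝ => ρ / (ζ * ρ + ∑ k, x k))
            = fun x => (ρ * W / (ζ * ρ + ∑ k, x k)) * (1 / W) := by
          funext x
          rw [div_mul_eq_mul_div]
          congr 1
          field_simp
        have hint : Integrable (fun x => ρ / (ζ * ρ + ∑ k, x k)) μ := by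
          rw [e]; exact hint2.mul_const _
        refine ⟨hint, ?_⟩
        have h5 : ∫ x, ρ / (ζ * ρ + ∑ k, x k) ∂μ ≤ 1 / W := by
          rw [e, integral_mul_const]
          have hW' : (0:ℝ) ≤ 1 / W := by positivity
          nlinarith [h3, hW']
        exact mul_le_mul_of_nonpos_left h5 hfac
  -- integrability of g
  have hg_int : Integrable (fun x => (∑ n, (x n / (ζ * ρ + ∑ k, x k)) * Real.log (F n))
      + ((1 - r) * (ζ - ζt)) * (ρ / (ζ * ρ + ∑ k, x k))) μ := by
    apply Integrable.add
    · exact integrable_finset_sum _ fun n _ => (hw_int n).mul_const _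
    · exact hρs_int.const_mul _
  -- value of ∫ g
  have hg_val : ∫ x, ((∑ n, (x n / (ζ * ρ + ∑ k, x k)) * Real.log (F n))
        + ((1 - r) * (ζ - ζt)) * (ρ / (ζ * ρ + ∑ k, x k))) ∂μ
      = (∑ n, lam n * Real.log (F n))
        + (1 - r) * (ζ - ζt) * ∫ x, ρ / (ζ * ρ + ∑ k, x k) ∂μ := by
    rw [integral_add (integrable_finset_sum _ fun n _ => (hw_int n).mul_const _)
      (hρs_int.const_mul _)]
    congr 1
    · rw [integral_finset_sum _ fun n _ => (hw_int n).mul_const _]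
      apply Finset.sum_congr rfl
      intro n _
      rw [integral_mul_const, ← hlam_def n]
    · exact integral_const_mul _ _
  -- integrability of f
  have hf_int : Integrable f μ := by
    apply Integrable.mono' (hg_int.abs.add (integrable_const |Real.log (1 / r)|)) hf_meas
    filter_upwards [hE] with x hx
    rw [Real.norm_eq_abs, abs_le]
    constructor
    · have h1 := key_pt x hx.1 hx.2
      have h2 : -|(∑ n, (x n / (ζ * ρ + ∑ k, x k)) * Real.log (F n))
          + ((1 - r) * (ζ - ζt)) * (ρ / (ζ * ρ + ∑ k, x k))|
          ≤ (∑ n, (x n / (ζ * ρ + ∑ k, x k)) * Real.log (F n))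
          + ((1 - r) * (ζ - ζt)) * (ρ / (ζ * ρ + ∑ k, x k)) := neg_abs_le _
      have h3 : (0:ℝ) ≤ |Real.log (1 / r)| := abs_nonneg _
      simp only [Pi.add_apply]
      linarith
    · have h1 := hfC x hx.1
      have h2 : Real.log (1 / r) ≤ |Real.log (1 / r)| := le_abs_self _
      have h3 : (0:ℝ) ≤ |(∑ n, (x n / (ζ * ρ + ∑ k, x k)) * Real.log (F n))
          + ((1 - r) * (ζ - ζt)) * (ρ / (ζ * ρ + ∑ k, x k))| := abs_nonneg _
      simp only [Pi.add_apply]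
      linarith
  -- deterministic step
  have hC : (1 / 4) * (1 - r) ^ 2 * ∑ n, (lam n - lamt n) ^ 2
      ≤ (∑ n, lam n * Real.log (F n)) + (1 - r) * (ζ - ζt) * (1 / W) := by
    have hsum_eq : (1 - r) * (ζ - ζt) * (1 / W)
        = ∑ n, ((r * lam n + (1 - r) * lamt n) - lam n) := by
      rw [Finset.sum_sub_distrib, Finset.sum_add_distrib, ← Finset.mul_sum, ← Finset.mul_sum,
        hlam_sum, hlamt_sum]
      field_simp
      ring
    rw [hsum_eq, ← Finset.sum_add_distrib, Finset.mul_sum]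
    apply Finset.sum_le_sum
    intro n _
    have hb1 : r * lam n + (1 - r) * lamt n ≤ 1 := by
      nlinarith [hlam_le n, hlamt_le n, hlam_nonneg n, hlamt_nonneg n]
    have hab : r * lam n + (1 - r) * lamt n = 0 → lam n = 0 := by
      intro h
      nlinarith [hlam_nonneg n, hlamt_nonneg n, mul_nonneg hr1' (hlamt_nonneg n)]
    have hsc := scalar_ineq (hlam_nonneg n) (hlam_le n) (hb_nonneg n) hb1 hab
    calc (1 / 4) * (1 - r) ^ 2 * (lam n - lamt n) ^ 2
        = (lam n - (r * lam n + (1 - r) * lamt n)) ^ 2 / 4 := by ring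
      _ ≤ lam n * Real.log (lam n / (r * lam n + (1 - r) * lamt n))
          - (lam n - (r * lam n + (1 - r) * lamt n)) := hsc
      _ = lam n * Real.log (F n) + ((r * lam n + (1 - r) * lamt n) - lam n) := by
          rw [hF]; ring
  -- conclusion
  calc (1 / 4) * (1 - r) ^ 2 * ∑ n, (lam n - lamt n) ^ 2
      ≤ (∑ n, lam n * Real.log (F n)) + (1 - r) * (ζ - ζt) * (1 / W) := hC
    _ ≤ (∑ n, lam n * Real.log (F n))
        + (1 - r) * (ζ - ζt) * ∫ x, ρ / (ζ * ρ + ∑ k, x k) ∂μ := by linarith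
    _ = ∫ x, ((∑ n, (x n / (ζ * ρ + ∑ k, x k)) * Real.log (F n))
        + ((1 - r) * (ζ - ζt)) * (ρ / (ζ * ρ + ∑ k, x k))) ∂μ := hg_val.symm
    _ ≤ ∫ x, f x ∂μ := by
        apply integral_mono_ae hg_int hf_int
        filter_upwards [hE] with x hx
        exact key_pt x hx.1 hx.2
end
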